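/- For each index i ∈ {1,2,3,4,5} there exist factorizations F and F' in Map₂ such that T is Hurwitz equivalent to ζᵢ·F and W₁ is Hurwitz equivalent to ζᵢ·F' (i.e. each of T and W₁ is Hurwitz equivalent to a factorization whose first entry is ζᵢ). -/
import Mathlib


/-- A single Hurwitz move: replace two consecutive entries `(x, y)` by `(x y x⁻¹, x)`. -/
def HurwitzMove {G : Type*} [Group G] (F F' : List G) : Prop :=
  ∃ (l₁ l₂ : List G) (x y : G),
    F = l₁ ++ x :: y :: l₂ ∧ F' = l₁ ++ (x * y * x⁻¹) :: x :: l₂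

/-- Hurwitz equivalence: the reflexive-symmetric-transitive closure of Hurwitz moves.
(The symmetric closure accounts for the inverse move `(x, y) ↦ (y, y⁻¹ x y)`.) -/
def HurwitzEquiv {G : Type*} [Group G] : List G → List G → Prop :=
  Relation.EqvGen HurwitzMove

/-- `n`-fold concatenation of a factorization with itself. -/
def fpow {G : Type*} (F : List G) (n : ℕ) : List G :=
  (List.replicate n F).flatten

/-- Simultaneous conjugation of all entries of a factorization by `φ`: `τ ↦ φ⁻¹ τ φ`. -/
def fconj {G : Type*} [Group G] (F : List G) (φ : G) : List G :=
  F.map fun τ => φ⁻¹ * τ * φ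

/-- Generators of the free group on five letters. -/
abbrev fg (i : Fin 5) : FreeGroup (Fin 5) := FreeGroup.of i

/-- The word `ζ₁ζ₂ζ₃ζ₄ζ₅` in the free group. -/
def Δw : FreeGroup (Fin 5) := fg 0 * fg 1 * fg 2 * fg 3 * fg 4

/-- The word `ζ₁ζ₂ζ₃ζ₄ζ₅²ζ₄ζ₃ζ₂ζ₁` in the free group. -/
def Iw : FreeGroup (Fin 5) :=
  fg 0 * fg 1 * fg 2 * fg 3 * fg 4 * fg 4 * fg 3 * fg 2 * fg 1 * fg 0

/-- Relations for the presentation of the genus-2 mapping class group `Map₂`: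
commutations `ζᵢζⱼ = ζⱼζᵢ` for `|i - j| ≥ 2`, braid relations
`ζᵢζᵢ₊₁ζᵢ = ζᵢ₊₁ζᵢζᵢ₊₁`, `(ζ₁ζ₂ζ₃ζ₄ζ₅)⁶ = 1`, `I = ζ₁ζ₂ζ₃ζ₄ζ₅²ζ₄ζ₃ζ₂ζ₁` is central,
and `I² = 1`. -/
def map2Rels : Set (FreeGroup (Fin 5)) :=
  { r | (∃ i j : Fin 5, (i : ℕ) + 2 ≤ (j : ℕ) ∧ r = fg i * fg j * (fg i)⁻¹ * (fg j)⁻¹) ∨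
        (∃ i : Fin 4, r = fg i.castSucc * fg i.succ * fg i.castSucc *
          (fg i.succ * fg i.castSucc * fg i.succ)⁻¹) ∨
        r = Δw ^ 6 ∨
        (∃ i : Fin 5, r = Iw * fg i * Iw⁻¹ * (fg i)⁻¹) ∨
        r = Iw ^ 2 }

/-- The mapping class group of a closed genus-2 surface, via its standard presentation. -/
abbrev Map₂ : Type := PresentedGroup map2Rels

/-- The Dehn twist generators `ζ₁, …, ζ₅` (indexed by `Fin 5`, so `ζ 0 = ζ₁`, …). -/
def ζ (i : Fin 5) : Map₂ := PresentedGroup.of i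

/-- The hyperelliptic involution `I = ζ₁ζ₂ζ₃ζ₄ζ₅²ζ₄ζ₃ζ₂ζ₁` as an element of `Map₂`. -/
def Ihe : Map₂ := ζ 0 * ζ 1 * ζ 2 * ζ 3 * ζ 4 * ζ 4 * ζ 3 * ζ 2 * ζ 1 * ζ 0

/-- The separating Dehn twist `σ = (ζ₁ζ₂)⁶`. -/
def σ : Map₂ := (ζ 0 * ζ 1) ^ 6

/-- The factorization `T = ζ₁·ζ₂·ζ₃·ζ₄·ζ₅·ζ₅·ζ₄·ζ₃·ζ₂·ζ₁`. -/
def T : List Map₂ := [ζ 0, ζ 1, ζ 2, ζ 3, ζ 4, ζ 4, ζ 3, ζ 2, ζ 1, ζ 0]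

/-- The factorization `W₀ = (T)²`. -/
def W₀ : List Map₂ := T ++ T

/-- The factorization `W₁ = (ζ₁·ζ₂·ζ₃·ζ₄·ζ₅)⁶`. -/
def W₁ : List Map₂ := fpow [ζ 0, ζ 1, ζ 2, ζ 3, ζ 4] 6

/-- The factorization `Φ_f = ζ₃·ζ₄·ζ₅·ζ₂·ζ₃·ζ₄·ζ₁·ζ₂·ζ₃`. -/
def Φf : List Map₂ := [ζ 2, ζ 3, ζ 4, ζ 1, ζ 2, ζ 3, ζ 0, ζ 1, ζ 2]

/-- The factorization `W₂ = σ·(ζ₃·ζ₄·ζ₅·ζ₂·ζ₃·ζ₄·ζ₁·ζ₂·ζ₃)²·T`. -/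
def W₂ : List Map₂ := σ :: (Φf ++ Φf ++ T)

lemma HurwitzEquiv.cons {G : Type*} [Group G] {l l' : List G} (a : G)
    (h : HurwitzEquiv l l') : HurwitzEquiv (a :: l) (a :: l') := by
  induction h with
  | rel x y hxy =>
      obtain ⟨l₁, l₂, u, v, h1, h2⟩ := hxy
      exact Relation.EqvGen.rel _ _ ⟨a :: l₁, l₂, u, v, by simp [h1], by simp [h2]⟩
  | refl x => exact Relation.EqvGen.refl _
  | symm x y _ ih => exact Relation.EqvGen.symm _ _ ih
  | trans x y z _ _ ih1 ih2 => exact Relation.EqvGen.trans _ _ _ ih1 ih2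

lemma move_to_front {G : Type*} [Group G] (l₁ : List G) (x : G) (l₂ : List G) :
    HurwitzEquiv (l₁ ++ x :: l₂) (x :: ((l₁.map fun a => x⁻¹ * a * x) ++ l₂)) := by
  induction l₁ with
  | nil => exact Relation.EqvGen.refl _
  | cons a t ih =>
      refine Relation.EqvGen.trans _ (a :: x :: ((t.map fun a => x⁻¹ * a * x) ++ l₂)) _
        (ih.cons a) ?_
      refine Relation.EqvGen.symm _ _ (Relation.EqvGen.rel _ _
        ⟨[], (t.map fun a => x⁻¹ * a * x) ++ l₂, x, x⁻¹ * a * x, rfl, ?_⟩)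
      simp [mul_assoc]

/-- For each `i`, both `T` and `W₁` are Hurwitz equivalent to factorizations whose first
entry is `ζᵢ`. -/
theorem first_entry_zeta (i : Fin 5) :
    ∃ F F' : List Map₂,
      HurwitzEquiv T (ζ i :: F) ∧ HurwitzEquiv W₁ (ζ i :: F') := by
  fin_cases i
  · exact ⟨_, _, move_to_front [] (ζ 0) [ζ 1, ζ 2, ζ 3, ζ 4, ζ 4, ζ 3, ζ 2, ζ 1, ζ 0],
      move_to_front [] (ζ 0) [ζ 1, ζ 2, ζ 3, ζ 4, ζ 0, ζ 1, ζ 2, ζ 3, ζ 4,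
        ζ 0, ζ 1, ζ 2, ζ 3, ζ 4, ζ 0, ζ 1, ζ 2, ζ 3, ζ 4,
        ζ 0, ζ 1, ζ 2, ζ 3, ζ 4, ζ 0, ζ 1, ζ 2, ζ 3, ζ 4]⟩
  · exact ⟨_, _, move_to_front [ζ 0] (ζ 1) [ζ 2, ζ 3, ζ 4, ζ 4, ζ 3, ζ 2, ζ 1, ζ 0],
      move_to_front [ζ 0] (ζ 1) [ζ 2, ζ 3, ζ 4, ζ 0, ζ 1, ζ 2, ζ 3, ζ 4,
        ζ 0, ζ 1, ζ 2, ζ 3, ζ 4, ζ 0, ζ 1, ζ 2, ζ 3, ζ 4,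
        ζ 0, ζ 1, ζ 2, ζ 3, ζ 4, ζ 0, ζ 1, ζ 2, ζ 3, ζ 4]⟩
  · exact ⟨_, _, move_to_front [ζ 0, ζ 1] (ζ 2) [ζ 3, ζ 4, ζ 4, ζ 3, ζ 2, ζ 1, ζ 0],
      move_to_front [ζ 0, ζ 1] (ζ 2) [ζ 3, ζ 4, ζ 0, ζ 1, ζ 2, ζ 3, ζ 4,
        ζ 0, ζ 1, ζ 2, ζ 3, ζ 4, ζ 0, ζ 1, ζ 2, ζ 3, ζ 4,
        ζ 0, ζ 1, ζ 2, ζ 3, ζ 4, ζ 0, ζ 1, ζ 2, ζ 3, ζ 4]⟩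
  · exact ⟨_, _, move_to_front [ζ 0, ζ 1, ζ 2] (ζ 3) [ζ 4, ζ 4, ζ 3, ζ 2, ζ 1, ζ 0],
      move_to_front [ζ 0, ζ 1, ζ 2] (ζ 3) [ζ 4, ζ 0, ζ 1, ζ 2, ζ 3, ζ 4,
        ζ 0, ζ 1, ζ 2, ζ 3, ζ 4, ζ 0, ζ 1, ζ 2, ζ 3, ζ 4,
        ζ 0, ζ 1, ζ 2, ζ 3, ζ 4, ζ 0, ζ 1, ζ 2, ζ 3, ζ 4]⟩
  · exact ⟨_, _, move_to_front [ζ 0, ζ 1, ζ 2, ζ 3] (ζ 4) [ζ 4, ζ 3, ζ 2, ζ 1, ζ 0],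
      move_to_front [ζ 0, ζ 1, ζ 2, ζ 3] (ζ 4) [ζ 0, ζ 1, ζ 2, ζ 3, ζ 4,
        ζ 0, ζ 1, ζ 2, ζ 3, ζ 4, ζ 0, ζ 1, ζ 2, ζ 3, ζ 4,
        ζ 0, ζ 1, ζ 2, ζ 3, ζ 4, ζ 0, ζ 1, ζ 2, ζ 3, ζ 4]⟩
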